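/- Every lifted-graphic matroid is quasi-graphic, i.e., every lifted-graphic matroid has a framework. -/

import Mathlib

open Set Matroid
open scoped Classical

namespace QuasiGraphicPaper

universe u v

/-- A finite multigraph: a set `V` of vertices (in an ambient type `α`), a set `E` of
edges (in an ambient type `β`), and an incidence function assigning to each edge an
unordered pair of endpoints; loop-edges and parallel edges are allowed. -/
structure Graph (α : Type u) (β : Type v) where
  V : Set α
  E : Set β
  ends : β → Sym2 α
  finV : V.Finite
  finE : E.Finite
  ends_mem : ∀ ⦃e⦄, e ∈ E → ∀ ⦃x⦄, x ∈ ends e → x ∈ V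

namespace Graph

variable {α : Type u} {β : Type v}

/-- `e` is a loop-edge of `G` at the vertex `v`. -/
def IsLoopAt (G : Graph α β) (e : β) (v : α) : Prop :=
  e ∈ G.E ∧ G.ends e = Sym2.diag v

/-- `loops_G(v)`: the set of loop-edges of `G` at `v`. -/
def loopsAt (G : Graph α β) (v : α) : Set β := {e | G.IsLoopAt e v}

/-- Two vertices are adjacent if some edge of `G` has them as its two endpoints. -/
def Adj (G : Graph α β) (u v : α) : Prop := ∃ e ∈ G.E, G.ends e = s(u, v)

/-- A graph is connected if any two of its vertices are joined by a walk.
(The graph with no vertices is connected.) -/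
def Connected (G : Graph α β) : Prop :=
  ∀ u ∈ G.V, ∀ v ∈ G.V, Relation.ReflTransGen G.Adj u v

/-- Delete a set `X` of vertices: remove the vertices in `X` and all edges meeting `X`. -/
def deleteVertices (G : Graph α β) (X : Set α) : Graph α β where
  V := G.V \ X
  E := {e ∈ G.E | ∀ x ∈ G.ends e, x ∉ X}
  ends := G.ends
  finV := G.finV.diff
  finE := G.finE.subset (sep_subset _ _)
  ends_mem := fun e he x hx => ⟨G.ends_mem he.1 hx, he.2 x hx⟩

/-- `G − v`: delete the single vertex `v`. -/
abbrev deleteVertex (G : Graph α β) (v : α) : Graph α β := G.deleteVertices {v}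

/-- `G − e`: delete the edge `e` (keeping all vertices). -/
def deleteEdge (G : Graph α β) (e : β) : Graph α β where
  V := G.V
  E := G.E \ {e}
  ends := G.ends
  finV := G.finV
  finE := G.finE.diff
  ends_mem := fun f hf x hx => G.ends_mem hf.1 hx

/-- `G[X]`: the subgraph of `G` with edge set `X` (intersected with `E(G)`) and
no isolated vertices. -/
def restrictEdges (G : Graph α β) (X : Set β) : Graph α β where
  V := {v | ∃ e ∈ X ∩ G.E, v ∈ G.ends e}
  E := X ∩ G.E
  ends := G.ends
  finV := G.finV.subset (by rintro v ⟨e, ⟨-, he⟩, hv⟩; exact G.ends_mem he hv)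
  finE := G.finE.subset inter_subset_right
  ends_mem := fun e he x hx => ⟨e, he, hx⟩

/-- The connected component of `G` containing the vertex `v`, as a graph. -/
def componentOf (G : Graph α β) (v : α) : Graph α β where
  V := {u ∈ G.V | Relation.ReflTransGen G.Adj v u}
  E := {e ∈ G.E | ∀ x ∈ G.ends e, Relation.ReflTransGen G.Adj v x}
  ends := G.ends
  finV := G.finV.subset (sep_subset _ _)
  finE := G.finE.subset (sep_subset _ _)
  ends_mem := fun e he x hx => ⟨G.ends_mem he.1 hx, he.2 x hx⟩

/-- `H` is a connected component of `G`. -/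
def IsComponentOf (H G : Graph α β) : Prop := ∃ v ∈ G.V, H = G.componentOf v

/-- The number of connected components of `G`. -/
noncomputable def ncomponents (G : Graph α β) : ℕ :=
  {H : Graph α β | H.IsComponentOf G}.ncard

/-- `G` has at most two connected components: among any three vertices, two are joined. -/
def AtMostTwoComponents (G : Graph α β) : Prop :=
  ∀ u ∈ G.V, ∀ v ∈ G.V, ∀ w ∈ G.V,
    Relation.ReflTransGen G.Adj u v ∨ Relation.ReflTransGen G.Adj u w ∨
      Relation.ReflTransGen G.Adj v w

/-- The degree of a vertex: loop-edges count twice. -/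
noncomputable def degree (G : Graph α β) (v : α) : ℕ :=
  ({e ∈ G.E | v ∈ G.ends e ∧ ¬ (G.ends e).IsDiag}).ncard +
    2 * ({e ∈ G.E | G.ends e = Sym2.diag v}).ncard

/-- `G` is a cycle: it is connected, has at least one edge, and every vertex has
degree two. -/
def IsCycleGraph (G : Graph α β) : Prop :=
  G.E.Nonempty ∧ G.Connected ∧ ∀ v ∈ G.V, G.degree v = 2

/-- `C` is (the edge set of) a cycle of `G`. -/
def CycleSet (G : Graph α β) (C : Set β) : Prop :=
  C ⊆ G.E ∧ (G.restrictEdges C).IsCycleGraph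

/-- A forest: a graph with no cycles (in particular no loop-edges). -/
def IsForest (G : Graph α β) : Prop := ∀ C, ¬ G.CycleSet C

/-- `H` is a subgraph of `G`. -/
def IsSubgraph (H G : Graph α β) : Prop := H.V ⊆ G.V ∧ H.E ⊆ G.E ∧ H.ends = G.ends

/-- `G` is `k`-connected if `G − X` is connected for every vertex set `X` with `|X| < k`. -/
def KConnected (G : Graph α β) (k : ℕ) : Prop :=
  ∀ X : Set α, X.encard < k → (G.deleteVertices X).Connected

/-- A theta: a `2`-connected graph with exactly two vertices of degree three, all
other vertices having degree two. -/
def IsTheta (H : Graph α β) : Prop :=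
  H.KConnected 2 ∧
    ∃ a ∈ H.V, ∃ b ∈ H.V, a ≠ b ∧ H.degree a = 3 ∧ H.degree b = 3 ∧
      ∀ v ∈ H.V, v ≠ a → v ≠ b → H.degree v = 2

/-- `G / e`: contract the non-loop edge `e` with endpoints `x` and `y`
(identifying `y` with `x` and deleting `e`). -/
noncomputable def contractEdge (G : Graph α β) (e : β) (x y : α) (he : e ∈ G.E)
    (hxy : G.ends e = s(x, y)) (hne : x ≠ y) : Graph α β where
  V := G.V \ {y}
  E := G.E \ {e}
  ends := fun f => (G.ends f).map (fun w => if w = y then x else w)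
  finV := G.finV.diff
  finE := G.finE.diff
  ends_mem := by
    rintro f ⟨hf, -⟩ z hz
    rw [Sym2.mem_map] at hz
    obtain ⟨w, hw, rfl⟩ := hz
    by_cases hwy : w = y
    · rw [if_pos hwy]
      have hx : x ∈ G.ends e := by rw [hxy]; exact Sym2.mem_mk_left x y
      exact ⟨G.ends_mem he hx, by simp [hne]⟩
    · rw [if_neg hwy]
      exact ⟨G.ends_mem hf hw, by simp [hwy]⟩

/-- `G ∘ e`: for a loop-edge `e` at a vertex `v` which is the unique loop-edge at `v`,
delete `v` and `e`, and replace every other edge `f = vw` at `v` by a loop-edge at `w`. -/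
noncomputable def circ (G : Graph α β) (e : β) (v : α)
    (hno : ∀ f ∈ G.E, G.ends f = Sym2.diag v → f = e) : Graph α β where
  V := G.V \ {v}
  E := G.E \ {e}
  ends := fun f =>
    if h : f ∈ G.E ∧ f ≠ e ∧ v ∈ G.ends f then Sym2.diag (Sym2.Mem.other h.2.2)
    else G.ends f
  finV := G.finV.diff
  finE := G.finE.diff
  ends_mem := by
    rintro f ⟨hf, hfe⟩ z hz
    have hfe' : f ≠ e := fun h' => hfe (by simp [h'])
    by_cases h : f ∈ G.E ∧ f ≠ e ∧ v ∈ G.ends f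
    · rw [dif_pos h] at hz
      have hze : z = Sym2.Mem.other h.2.2 := by
        have h2 : z ∈ s(Sym2.Mem.other h.2.2, Sym2.Mem.other h.2.2) := hz
        rw [Sym2.mem_iff] at h2
        tauto
      subst hze
      refine ⟨G.ends_mem hf (Sym2.other_mem h.2.2), ?_⟩
      simp only [mem_singleton_iff]
      intro hzv
      apply h.2.1
      apply hno f hf
      show G.ends f = s(v, v)
      rw [← Sym2.other_spec h.2.2, hzv]
    · rw [dif_neg h] at hz
      refine ⟨G.ends_mem hf hz, ?_⟩
      simp only [mem_singleton_iff]
      intro hzv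
      subst hzv
      exact h ⟨hf, hfe', hz⟩

end Graph

/-! ### Matroid notions -/

variable {α : Type u} {β : Type v}

/-- The rank `r_M(X)` of a set `X` in a matroid `M`: the maximum size of an
independent subset of `X`. -/
noncomputable def rank (M : Matroid β) (X : Set β) : ℕ :=
  (⨆ I ∈ {I : Set β | M.Indep I ∧ I ⊆ X}, I.encard).toNat

/-- `C` is a circuit of `M` : a minimal dependent set. -/
def IsCircuit (M : Matroid β) (C : Set β) : Prop :=
  M.Dep C ∧ ∀ D, D ⊂ C → M.Indep D

/-- `M \ D` : delete the set `D` from the matroid `M`. -/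
def deleteM (M : Matroid β) (D : Set β) : Matroid β := M ↾ (M.E \ D)

/-- `M / C` : contract the set `C` in the matroid `M`. -/
def contractM (M : Matroid β) (C : Set β) : Matroid β := (M✶ ↾ (M✶.E \ C))✶

/-- `G` is a weak framework for `M`: conditions (1)–(3). -/
def WeakFramework (G : Graph α β) (M : Matroid β) : Prop :=
  G.E = M.E ∧
  (∀ H : Graph α β, H.IsComponentOf G → rank M H.E ≤ H.V.ncard) ∧
  (∀ v ∈ G.V,
    M.closure (G.deleteVertex v).E ⊆ (G.deleteVertex v).E ∪ G.loopsAt v)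

/-- `G` is a framework for `M`: conditions (1)–(4). -/
def Framework (G : Graph α β) (M : Matroid β) : Prop :=
  WeakFramework G M ∧
    ∀ C, IsCircuit M C → (G.restrictEdges C).AtMostTwoComponents

/-- `M` is the cycle matroid `M(G)` of `G` : the ground set of `M` is `E(G)`, and the
circuits of `M` are exactly the edge sets of cycles of `G`. -/
def IsCycleMatroidOf (G : Graph α β) (M : Matroid β) : Prop :=
  M.E = G.E ∧ ∀ C, IsCircuit M C ↔ G.CycleSet C

/-- A matroid is graphic if it is the cycle matroid of some graph. -/
def Graphic (M : Matroid β) : Prop :=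
  ∃ (γ : Type v) (G : Graph γ β), IsCycleMatroidOf G M

/-- A matroid is quasi-graphic if it has a framework. -/
def QuasiGraphic (M : Matroid β) : Prop :=
  ∃ (γ : Type v) (G : Graph γ β), Framework G M

/-- `M` is a lift of `N` if some single-element extension `M'` of `M` satisfies
`M' \ e = M` and `M' / e = N`. -/
def IsLiftOf (M N : Matroid β) : Prop :=
  ∃ M' : Matroid (Option β), (none : Option β) ∈ M'.E ∧
    deleteM M' {none} = M.map some (Option.some_injective β).injOn ∧
    contractM M' {none} = N.map some (Option.some_injective β).injOn

/-- `M` is a lifted-graphic matroid: for some single-element extension `M'` of `M`,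
`M' / e` is graphic. -/
def LiftedGraphic (M : Matroid β) : Prop :=
  ∃ M' : Matroid (Option β), (none : Option β) ∈ M'.E ∧
    deleteM M' {none} = M.map some (Option.some_injective β).injOn ∧
    Graphic (contractM M' {none})

/-- `(M, V)` is a framed matroid: `V` is a basis of `M` and every element of `M` is
spanned by a subset of `V` with at most two elements. -/
def FramedMatroid {γ : Type u} (M : Matroid γ) (V : Set γ) : Prop :=
  M.IsBase V ∧ ∀ e ∈ M.E, ∃ S ⊆ V, S.ncard ≤ 2 ∧ e ∈ M.closure S

/-- `M` is a frame matroid: `M = M' \ V` for some framed matroid `(M', V)`. -/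
def FrameMatroid (M : Matroid β) : Prop :=
  ∃ (γ : Type v) (M' : Matroid (β ⊕ γ)) (V : Set (β ⊕ γ)),
    FramedMatroid M' V ∧
      deleteM M' V = M.map Sum.inl Sum.inl_injective.injOn

/-- `M` is `3`-connected: it has no `k`-separation for `k ≤ 2`. -/
def ThreeConnected (M : Matroid β) : Prop :=
  ∀ X ⊆ M.E, ∀ k : ℕ, k ≤ 2 → (k : ℕ∞) ≤ X.encard → (k : ℕ∞) ≤ (M.E \ X).encard →
    rank M M.E + k ≤ rank M X + rank M (M.E \ X)

/-- `M` is representable over some field. -/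
def Representable (M : Matroid β) : Prop :=
  ∃ (F : Type v) (_ : Field F) (W : Type v) (_ : AddCommGroup W) (_ : Module F W)
    (φ : β → W), ∀ I ⊆ M.E, (M.Indep I ↔ LinearIndependent F (fun x : I => φ x))

/-- A collection `B` of cycles of `G` satisfies the theta-property if there is no
theta-subgraph of `G` with exactly two of its three cycles in `B`. -/
def ThetaProperty (G : Graph α β) (B : Set (Set β)) : Prop :=
  ∀ H : Graph α β, H.IsSubgraph G → H.IsTheta →
    ∀ C1 C2 C3, H.CycleSet C1 → H.CycleSet C2 → H.CycleSet C3 →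
      C1 ≠ C2 → C2 ≠ C3 → C1 ≠ C3 → C1 ∈ B → C2 ∈ B → C3 ∈ B

end QuasiGraphicPaper

/-!
Let `M'` be a matroid with `M' ＼ e = M` and `M' ／ e = N`, the cycle matroid of a graph `G`.
Then `G` is already a framework for `M' ＼ e`:
* an independent set of `M' ＼ e` keeps all but at most one of its elements independent in `N`,
  where it is a forest; so the edges of a component with `k` vertices have rank at most
  `(k - 1) + 1`;
* closure in `M' ＼ e` is contained in closure in `M' ／ e`, so an edge meeting `v` and spanned by
  `E(G - v)` would lie on a cycle of `G` that meets `v` in a single non-loop edge;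
* for a circuit `C` of `M' ＼ e`, each edge of `C` is spanned by the rest of `C` in `N`, so every
  component of `G[C]` contains a circuit of `N`; since `C` has `N`-rank at least `|C| - 2`, at most
  two such circuits can be disjoint.
Relabelling the edges along `some : β → Option β` turns this into a framework for `M`.
-/

lemma Sym2.mem_diag_iff {α : Type*} {a b : α} : a ∈ Sym2.diag b ↔ a = b :=
  Sym2.mem_iff.trans or_self_iff

lemma Sym2.IsDiag.eq_diag_of_mem {α : Type*} {z : Sym2 α} {a : α} (hz : z.IsDiag) (ha : a ∈ z) :
    z = Sym2.diag a := by
  induction z using Sym2.ind with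
  | _ x y =>
    obtain rfl := Sym2.mk_isDiag_iff.1 hz
    obtain rfl := Sym2.mem_diag_iff.1 ha
    rfl

namespace SimpleGraph

variable {V : Type*} {G : SimpleGraph V}

lemma IsAcyclic.encard_edgeSet_add_one_le [Finite V] [Nonempty V] (h : G.IsAcyclic) :
    G.edgeSet.encard + 1 ≤ ENat.card V := by
  obtain ⟨T, hGT, -, hT⟩ := connected_top.exists_isTree_le_of_le_of_isAcyclic le_top h
  have hcard : Nat.card T.edgeSet + 1 = Nat.card V := (isTree_iff_connected_and_card.1 hT).2
  calc G.edgeSet.encard + 1 ≤ T.edgeSet.encard + 1 := by gcongr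
    _ = ENat.card V := by
      rw [← ENat.card_coe_set_eq, ENat.card_eq_coe_natCard, ENat.card_eq_coe_natCard V, ← hcard,
        Nat.cast_add, Nat.cast_one]

lemma Walk.adj_getVert_val_add_one {u : V} (p : G.Walk u u) [NeZero p.length]
    (i : ZMod p.length) : G.Adj (p.getVert i.val) (p.getVert (i + 1).val) := by
  have hi := i.val_lt
  have hsucc : p.getVert (i + 1).val = p.getVert (i.val + 1) := by
    rw [ZMod.val_add, ZMod.val_one_eq_one_mod, Nat.add_mod_mod]
    rcases (Nat.succ_le_of_lt hi).lt_or_eq with h | h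
    · rw [Nat.mod_eq_of_lt h]
    · rw [← Nat.succ_eq_add_one, h, Nat.mod_self, getVert_zero, getVert_length]
  rw [hsucc]
  exact p.adj_getVert_succ hi

end SimpleGraph

namespace Matroid

variable {α : Type*} {M : Matroid α} {e : α} {I J X : Set α}

lemma delete_closure_subset_contract_closure (M : Matroid α) (D X : Set α) :
    (M ＼ D).closure X ⊆ (M ／ D).closure X := by
  rw [delete_closure_eq, contract_closure_eq]
  exact sdiff_subset_sdiff_left (M.closure_subset_closure (sdiff_subset.trans subset_union_left))

/-- Contracting `e` is contracting a basis `K` of `{e}`, and `|K| ≤ 1`. -/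
lemma Indep.exists_subset_contract_singleton_indep (hI : M.Indep I) :
    ∃ J ⊆ I, (M ／ {e}).Indep J ∧ I.encard ≤ J.encard + 1 := by
  obtain ⟨K, hK⟩ := M.exists_isBasis' {e}
  obtain ⟨B, hB, hKB⟩ := hK.indep.subset_isBasis'_of_subset (subset_union_right (s := I))
  refine ⟨B \ K, ?_, hK.contract_indep_iff.2 ⟨?_, ?_⟩, ?_⟩
  · rw [sdiff_subset_iff, union_comm]
    exact hB.subset
  · rw [sdiff_union_of_subset hKB]
    exact hB.indep
  · rw [disjoint_singleton_left]
    rintro ⟨heB, heK⟩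
    exact hK.insert_not_indep ⟨rfl, heK⟩ (hB.indep.subset (insert_subset heB hKB))
  · calc I.encard ≤ B.encard := by
          rw [hB.encard_eq_eRk]
          exact hI.encard_le_eRk_of_subset subset_union_left
      _ = (B \ K).encard + K.encard := (encard_sdiff_add_encard_of_subset hKB).symm
      _ ≤ (B \ K).encard + 1 := by
          gcongr
          simpa using encard_le_encard hK.subset

lemma IsCircuit.map {β : Type*} {C : Set α} (hC : M.IsCircuit C) {f : α → β}
    (hf : InjOn f M.E) : (M.map f hf).IsCircuit (f '' C) := by
  refine isCircuit_iff_forall_ssubset.2 ⟨map_dep_iff.2 ⟨C, hC.dep, rfl⟩, fun I hI => ?_⟩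
  obtain ⟨I₀, hI₀C, rfl⟩ := subset_image_iff.1 hI.subset
  exact (hC.ssubset_indep (hI₀C.ssubset_of_ne (by rintro rfl; exact hI.ne rfl))).map f hf

lemma Indep.encard_add_encard_le_of_pairwiseDisjoint_dep {ι : Type*} {s : Set ι}
    {D : ι → Set α} (hJ : M.Indep J) (hJX : J ⊆ X) (hD : ∀ i ∈ s, M.Dep (D i) ∧ D i ⊆ X)
    (hdisj : s.PairwiseDisjoint D) : J.encard + s.encard ≤ X.encard := by
  obtain rfl | ⟨i₀, hi₀⟩ := s.eq_empty_or_nonempty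
  · simpa using encard_le_encard hJX
  have : Nonempty α := ⟨(hD i₀ hi₀).1.nonempty.some⟩
  have hout : ∀ i ∈ s, ∃ d ∈ D i, d ∉ J := fun i hi => by
    by_contra! h
    exact (hD i hi).1.not_indep (hJ.subset h)
  choose! d hdD hdJ using hout
  have hinj : InjOn d s := fun i hi j hj hij =>
    hdisj.elim hi hj (not_disjoint_iff.2 ⟨d i, hdD i hi, hij ▸ hdD j hj⟩)
  calc J.encard + s.encard ≤ J.encard + (X \ J).encard := by
        gcongr
        exact encard_le_encard_of_injOn (fun i hi => ⟨(hD i hi).2 (hdD i hi), hdJ i hi⟩) hinj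
    _ = X.encard := by rw [add_comm, encard_sdiff_add_encard_of_subset hJX]

end Matroid

namespace QuasiGraphicPaper

lemma isCircuit_iff_isCircuit {α : Type*} {M : Matroid α} {C : Set α} :
    IsCircuit M C ↔ M.IsCircuit C :=
  isCircuit_iff_forall_ssubset.symm

lemma rank_eq_toNat_eRk {α : Type*} (M : Matroid α) (X : Set α) :
    rank M X = (M.eRk X).toNat := by
  obtain ⟨I, hI⟩ := M.exists_isBasis' X
  refine congrArg ENat.toNat <|
    le_antisymm (iSup₂_le fun J hJ => hJ.1.encard_le_eRk_of_subset hJ.2) ?_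
  rw [← hI.encard_eq_eRk]
  exact le_iSup₂_of_le (f := fun J (_ : J ∈ {J | M.Indep J ∧ J ⊆ X}) => J.encard) I
    ⟨hI.indep, hI.subset⟩ le_rfl

lemma rank_map_image {α β : Type*} (M : Matroid α) {f : α → β} (hf : InjOn f M.E) {X : Set α}
    (hX : X ⊆ M.E) : rank (M.map f hf) (f '' X) = rank M X := by
  rw [rank_eq_toNat_eRk, rank_eq_toNat_eRk, eRk_map M hf hX]

namespace Graph

variable {γ δ : Type*} {G : Graph γ δ} {C D J : Set δ}

lemma ext {H : Graph γ δ} (hV : G.V = H.V) (hE : G.E = H.E) (hends : G.ends = H.ends) :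
    G = H := by
  cases G; cases H; cases hV; cases hE; cases hends; rfl

lemma restrictEdges_E (hC : C ⊆ G.E) : (G.restrictEdges C).E = C :=
  inter_eq_self_of_subset_left hC

lemma restrictEdges_V (hC : C ⊆ G.E) :
    (G.restrictEdges C).V = {v | ∃ e ∈ C, v ∈ G.ends e} := by
  simp only [restrictEdges, inter_eq_self_of_subset_left hC]

lemma degree_restrictEdges (hC : C ⊆ G.E) (v : γ) :
    (G.restrictEdges C).degree v = {e ∈ C | v ∈ G.ends e ∧ ¬ (G.ends e).IsDiag}.ncard +
      2 * {e ∈ C | G.ends e = Sym2.diag v}.ncard := by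
  rw [degree, restrictEdges_E hC]
  rfl

lemma restrictEdges_adj_mono (hCD : C ⊆ D) {u v : γ} (h : (G.restrictEdges C).Adj u v) :
    (G.restrictEdges D).Adj u v :=
  let ⟨e, he, hends⟩ := h
  ⟨e, ⟨hCD he.1, he.2⟩, hends⟩

lemma adj_symm (G : Graph γ δ) {u v : γ} (h : G.Adj u v) : G.Adj v u :=
  let ⟨e, he, hends⟩ := h
  ⟨e, he, hends.trans Sym2.eq_swap⟩

lemma reflTransGen_adj_symm {x y : γ} (h : Relation.ReflTransGen G.Adj x y) :
    Relation.ReflTransGen G.Adj y x := by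
  induction h with
  | refl => rfl
  | tail _ hab ih => exact ih.head (G.adj_symm hab)

lemma componentOf_isSubgraph (G : Graph γ δ) (v : γ) : (G.componentOf v).IsSubgraph G :=
  ⟨sep_subset _ _, sep_subset _ _, rfl⟩

lemma CycleSet.reflTransGen (hC : G.CycleSet C) {e f : δ} (he : e ∈ C) (hf : f ∈ C) {x y : γ}
    (hx : x ∈ G.ends e) (hy : y ∈ G.ends f) :
    Relation.ReflTransGen (G.restrictEdges C).Adj x y :=
  hC.2.2.1 x ⟨e, ⟨he, hC.1 he⟩, hx⟩ y ⟨f, ⟨hf, hC.1 hf⟩, hy⟩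

lemma CycleSet.exists_ne_mem_ends (hC : G.CycleSet C) {f : δ} (hf : f ∈ C) {v : γ}
    (hv : v ∈ G.ends f) (hloop : G.ends f ≠ Sym2.diag v) : ∃ g ∈ C, g ≠ f ∧ v ∈ G.ends g := by
  by_contra! hg
  have hnd : ¬ (G.ends f).IsDiag := fun hd => hloop (hd.eq_diag_of_mem hv)
  have h1 : {e ∈ C | v ∈ G.ends e ∧ ¬ (G.ends e).IsDiag} = {f} := by
    ext e
    refine ⟨fun ⟨he, hve, _⟩ => by_contra fun hef => hg e he hef hve, ?_⟩
    rintro rfl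
    exact ⟨hf, hv, hnd⟩
  have h2 : {e ∈ C | G.ends e = Sym2.diag v} = ∅ := by
    refine eq_empty_of_forall_notMem fun e ⟨he, hev⟩ => ?_
    obtain rfl | hef := eq_or_ne e f
    · exact hloop hev
    · exact hg e he hef (hev ▸ Sym2.mem_diag_iff.2 rfl)
  have hdeg := hC.2.2.2 v ⟨f, ⟨hf, hC.1 hf⟩, hv⟩
  rw [degree_restrictEdges hC.1, h1, h2] at hdeg
  simp at hdeg

lemma cycleSet_singleton {e : δ} (he : e ∈ G.E) (hd : (G.ends e).IsDiag) : G.CycleSet {e} := by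
  have hsub : {e} ⊆ G.E := singleton_subset_iff.2 he
  obtain ⟨a, ha⟩ : ∃ a, G.ends e = Sym2.diag a := ⟨_, (Sym2.diag_diagElem hd).symm⟩
  have hV : (G.restrictEdges {e}).V = {a} := by
    rw [restrictEdges_V hsub]
    ext v
    simp [ha, Sym2.mem_diag_iff]
  refine ⟨hsub, ⟨e, (restrictEdges_E hsub).symm ▸ rfl⟩, ?_, ?_⟩
  · rintro u hu v hv
    rw [hV] at hu hv
    rw [hu, hv]
  · rintro v hv
    rw [hV] at hv
    obtain rfl := hv
    have h1 : {f ∈ ({e} : Set δ) | v ∈ G.ends f ∧ ¬ (G.ends f).IsDiag} = ∅ := by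
      ext f
      simp only [mem_singleton_iff, mem_empty_iff_false, iff_false]
      rintro ⟨rfl, -, hnd⟩
      exact hnd hd
    have h2 : {f ∈ ({e} : Set δ) | G.ends f = Sym2.diag v} = {e} := by
      ext f
      simp only [mem_singleton_iff, mem_ofPred_eq, and_iff_left_iff_imp]
      rintro rfl
      exact ha
    rw [degree_restrictEdges hsub, h1, h2, ncard_empty, ncard_singleton]

section Polygon

variable {n : ℕ} {v : ZMod n → γ} {e : ZMod n → δ}

lemma restrictEdges_range_V (hE : range e ⊆ G.E)
    (hends : ∀ i, G.ends (e i) = s(v i, v (i + 1))) :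
    (G.restrictEdges (range e)).V = range v := by
  rw [restrictEdges_V hE]
  ext x
  constructor
  · rintro ⟨_, ⟨i, rfl⟩, hx⟩
    rw [hends, Sym2.mem_iff] at hx
    rcases hx with rfl | rfl
    exacts [⟨i, rfl⟩, ⟨i + 1, rfl⟩]
  · rintro ⟨i, rfl⟩
    exact ⟨e i, mem_range_self i, hends i ▸ Sym2.mem_mk_left _ _⟩

lemma cycleSet_range (hn : 1 < n) (hv : Function.Injective v) (he : Function.Injective e)
    (heE : ∀ i, e i ∈ G.E) (hends : ∀ i, G.ends (e i) = s(v i, v (i + 1))) :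
    G.CycleSet (range e) := by
  have : Fact (1 < n) := ⟨hn⟩
  have hE : range e ⊆ G.E := range_subset_iff.2 heE
  have hV := restrictEdges_range_V hE hends
  have hreach (i : ZMod n) (k : ℕ) :
      Relation.ReflTransGen (G.restrictEdges (range e)).Adj (v i) (v (i + k)) := by
    induction k with
    | zero => simpa using Relation.ReflTransGen.refl
    | succ k ih =>
      refine ih.tail ⟨e (i + k), (restrictEdges_E hE).symm ▸ mem_range_self _, ?_⟩
      show G.ends _ = _
      simpa [add_assoc] using hends (i + k)
  have hnd (i : ZMod n) : ¬ (G.ends (e i)).IsDiag := by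
    rw [hends, Sym2.mk_isDiag_iff]
    exact fun h => one_ne_zero (left_eq_add.1 (hv h))
  refine ⟨hE, ⟨e 0, (restrictEdges_E hE).symm ▸ mem_range_self 0⟩, ?_, ?_⟩
  · rintro _ hx _ hy
    obtain ⟨i, rfl⟩ := hV ▸ hx
    obtain ⟨j, rfl⟩ := hV ▸ hy
    simpa using hreach i (j - i).val
  · rintro _ hx
    obtain ⟨i, rfl⟩ := hV ▸ hx
    have h1 : {d ∈ range e | v i ∈ G.ends d ∧ ¬ (G.ends d).IsDiag} = {e (i - 1), e i} := by
      ext d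
      simp only [mem_ofPred_eq, mem_insert_iff, mem_singleton_iff]
      constructor
      · rintro ⟨⟨j, rfl⟩, hij, -⟩
        rw [hends, Sym2.mem_iff] at hij
        rcases hij with h | h
        · exact Or.inr (congrArg e (hv h).symm)
        · exact Or.inl (congrArg e (by rw [hv h]; ring))
      · rintro (rfl | rfl) <;> exact ⟨mem_range_self _, by simp [hends], hnd _⟩
    have h2 : {d ∈ range e | G.ends d = Sym2.diag (v i)} = ∅ :=
      eq_empty_of_forall_notMem fun d ⟨⟨j, hj⟩, hd⟩ => hnd j (hj ▸ hd ▸ Sym2.diag_isDiag _)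
    have hne : e (i - 1) ≠ e i := fun h => one_ne_zero (sub_eq_self.1 (he h))
    rw [degree_restrictEdges hE, h1, h2, ncard_empty, ncard_pair hne]

end Polygon

/-- Two parallel edges form the polygon of length two. -/
lemma cycleSet_pair {e f : δ} (he : e ∈ G.E) (hf : f ∈ G.E) (hef : e ≠ f)
    (hends : G.ends e = G.ends f) (hnd : ¬ (G.ends e).IsDiag) : G.CycleSet {e, f} := by
  induction hab : G.ends e using Sym2.ind with
  | _ a b =>
  rw [hab, Sym2.mk_isDiag_iff] at hnd
  have hcases : ∀ i : ZMod 2, i = 0 ∨ i = 1 := by decide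
  have h10 : (1 : ZMod 2) ≠ 0 := by decide
  have h11 : (1 + 1 : ZMod 2) = 0 := by decide
  have hv : Function.Injective fun i : ZMod 2 => if i = 0 then a else b := by
    intro i j
    rcases hcases i with rfl | rfl <;> rcases hcases j with rfl | rfl <;>
      simp [h10, hnd, Ne.symm hnd]
  have he' : Function.Injective fun i : ZMod 2 => if i = 0 then e else f := by
    intro i j
    rcases hcases i with rfl | rfl <;> rcases hcases j with rfl | rfl <;>
      simp [h10, hef, Ne.symm hef]
  have hpoly := cycleSet_range one_lt_two hv he'
    (fun i => by rcases hcases i with rfl | rfl <;> simpa [h10])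
    (fun i => by rcases hcases i with rfl | rfl <;> simp [h10, h11, ← hends, hab, Sym2.eq_swap])
  convert hpoly using 1
  ext d
  constructor
  · rintro (rfl | rfl)
    exacts [⟨0, by simp⟩, ⟨1, by simp [h10]⟩]
  · rintro ⟨i, rfl⟩
    rcases hcases i with rfl | rfl <;> simp [h10]

lemma exists_cycleSet_of_isCycle {V : Type*} {S : SimpleGraph V} {φ : V → γ}
    (hφ : Function.Injective φ) (hJ : J ⊆ G.E)
    (hS : ∀ x y, S.Adj x y → ∃ e ∈ J, G.ends e = s(φ x, φ y)) {u : V} {p : S.Walk u u}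
    (hp : p.IsCycle) : ∃ C ⊆ J, G.CycleSet C := by
  have h3 : 3 ≤ p.length := hp.three_le_length
  have : NeZero p.length := ⟨by omega⟩
  set v : ZMod p.length → γ := fun i => φ (p.getVert i.val)
  choose e heJ hends using fun i : ZMod p.length => hS _ _ (p.adj_getVert_val_add_one i)
  have hv : Function.Injective v := fun i j h => ZMod.val_injective _ <|
    hp.getVert_injOn' (by have := i.val_lt; simp only [mem_ofPred_eq]; omega)
      (by have := j.val_lt; simp only [mem_ofPred_eq]; omega) (hφ h)
  have he : Function.Injective e := by
    intro i j h
    rcases Sym2.eq_iff.1 ((hends i).symm.trans (h ▸ hends j)) with ⟨h1, -⟩ | ⟨h1, h2⟩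
    · exact hv h1
    -- the edges `i` and `j` would be traversed in opposite directions, so `2 = 0` in `ZMod n`
    · have h20 : ((2 : ℕ) : ZMod p.length) = 0 := by
        push_cast
        linear_combination hv h2 - hv h1
      rw [ZMod.natCast_eq_zero_iff] at h20
      exact absurd (Nat.le_of_dvd two_pos h20) (by omega)
  exact ⟨range e, range_subset_iff.2 heJ,
    cycleSet_range (by omega) hv he (fun i => hJ (heJ i)) hends⟩

def simpleGraphOn (G : Graph γ δ) (J : Set δ) (W : Set γ) : SimpleGraph W :=
  SimpleGraph.fromRel fun x y => ∃ e ∈ J, G.ends e = s(x.1, y.1)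

lemma exists_of_simpleGraphOn_adj {W : Set γ} {x y : W} (h : (G.simpleGraphOn J W).Adj x y) :
    ∃ e ∈ J, G.ends e = s(x.1, y.1) := by
  obtain ⟨-, h | ⟨e, he, hxy⟩⟩ := h
  exacts [h, ⟨e, he, hxy.trans Sym2.eq_swap⟩]

lemma image_edgeSet_simpleGraphOn {W : Set γ} (hJW : ∀ e ∈ J, ∀ x ∈ G.ends e, x ∈ W)
    (hnd : ∀ e ∈ J, ¬ (G.ends e).IsDiag) :
    Sym2.map Subtype.val '' (G.simpleGraphOn J W).edgeSet = G.ends '' J := by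
  ext z
  constructor
  · rintro ⟨z, hz, rfl⟩
    induction z using Sym2.ind with
    | _ x y => exact exists_of_simpleGraphOn_adj hz
  · rintro ⟨e, he, rfl⟩
    induction hab : G.ends e using Sym2.ind with
    | _ a b =>
    have ha := hJW e he a (hab ▸ Sym2.mem_mk_left a b)
    have hb := hJW e he b (hab ▸ Sym2.mem_mk_right a b)
    have hab' : (⟨a, ha⟩ : W) ≠ ⟨b, hb⟩ := fun h =>
      hnd e he (hab ▸ Sym2.mk_isDiag_iff.2 (congrArg Subtype.val h))
    refine ⟨s(⟨a, ha⟩, ⟨b, hb⟩), ?_, rfl⟩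
    exact (SimpleGraph.mem_edgeSet _).2 <|
      (SimpleGraph.fromRel_adj _ _ _).2 ⟨hab', .inl ⟨e, he, hab⟩⟩

/-- Loops and parallel pairs are cycles, so `J` is the edge set of an acyclic simple graph
on `W`. -/
theorem encard_add_one_le_of_forall_not_cycleSet {W : Set γ} (hJ : J ⊆ G.E)
    (hJW : ∀ e ∈ J, ∀ x ∈ G.ends e, x ∈ W) (hW : W.Finite) (hWne : W.Nonempty)
    (hacyc : ∀ C ⊆ J, ¬ G.CycleSet C) : J.encard + 1 ≤ W.encard := by
  have hnd : ∀ e ∈ J, ¬ (G.ends e).IsDiag := fun e he hd =>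
    hacyc {e} (singleton_subset_iff.2 he) (cycleSet_singleton (hJ he) hd)
  have hinj : InjOn G.ends J := fun e he f hf hef => by_contra fun hne =>
    hacyc {e, f} (insert_subset he (singleton_subset_iff.2 hf))
      (cycleSet_pair (hJ he) (hJ hf) hne hef (hnd e he))
  have hS : (G.simpleGraphOn J W).IsAcyclic := fun _ _ hp =>
    let ⟨C, hCJ, hC⟩ := exists_cycleSet_of_isCycle Subtype.val_injective hJ
      (fun _ _ => exists_of_simpleGraphOn_adj) hp
    hacyc C hCJ hC
  have := hW.to_subtype
  have := hWne.to_subtype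
  calc J.encard + 1 = (G.simpleGraphOn J W).edgeSet.encard + 1 := by
        rw [← hinj.encard_image, ← image_edgeSet_simpleGraphOn hJW hnd,
          (Sym2.map.injective Subtype.val_injective).encard_image]
    _ ≤ ENat.card W := hS.encard_edgeSet_add_one_le
    _ = W.encard := ENat.card_coe_set_eq W

def comap {ε : Type*} (G : Graph γ δ) (f : ε → δ) (hf : Function.Injective f) : Graph γ ε where
  V := G.V
  E := f ⁻¹' G.E
  ends := G.ends ∘ f
  finV := G.finV
  finE := G.finE.preimage hf.injOn
  ends_mem := fun _ he _ hx => G.ends_mem he hx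

section comap

variable {ε : Type*} {f : ε → δ} {hf : Function.Injective f}

lemma adj_comap (hE : G.E ⊆ range f) : (G.comap f hf).Adj = G.Adj := by
  ext u v
  constructor
  · rintro ⟨e, he, huv⟩
    exact ⟨f e, he, huv⟩
  · rintro ⟨_, he, huv⟩
    obtain ⟨e, rfl⟩ := hE he
    exact ⟨e, he, huv⟩

lemma componentOf_comap (hE : G.E ⊆ range f) (v : γ) :
    (G.comap f hf).componentOf v = (G.componentOf v).comap f hf := by
  refine ext ?_ ?_ rfl <;> simp only [componentOf, adj_comap hE] <;> rfl

lemma restrictEdges_comap (C : Set ε) :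
    (G.comap f hf).restrictEdges C = (G.restrictEdges (f '' C)).comap f hf := by
  refine ext ?_ ?_ rfl
  · ext v
    simp [restrictEdges, comap]
  · show C ∩ f ⁻¹' G.E = f ⁻¹' (f '' C ∩ G.E)
    rw [preimage_inter, hf.preimage_image]

lemma atMostTwoComponents_comap {H : Graph γ δ} (hE : H.E ⊆ range f) :
    (H.comap f hf).AtMostTwoComponents ↔ H.AtMostTwoComponents := by
  rw [AtMostTwoComponents, adj_comap hE]
  rfl

end comap

end Graph

section Framework

variable {α γ : Type*} {M : Matroid α} {e : α} {G : Graph γ α}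

lemma IsCycleMatroidOf.isCircuit_iff {N : Matroid α} (hG : IsCycleMatroidOf G N) {C : Set α} :
    N.IsCircuit C ↔ G.CycleSet C :=
  isCircuit_iff_isCircuit.symm.trans (hG.2 C)

lemma rank_delete_le_ncard (hG : IsCycleMatroidOf G (M ／ {e})) {H : Graph γ α}
    (hHG : H.IsSubgraph G) (hne : H.V.Nonempty) : rank (M ＼ {e}) H.E ≤ H.V.ncard := by
  obtain ⟨I, hI⟩ := (M ＼ {e}).exists_isBasis' H.E
  obtain ⟨J, hJI, hJ, hIJ⟩ := hI.indep.of_delete.exists_subset_contract_singleton_indep (e := e)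
  have hJH : J ⊆ H.E := hJI.trans hI.subset
  have hacyc : ∀ C ⊆ J, ¬ G.CycleSet C := fun C hCJ hC =>
    (hG.isCircuit_iff.2 hC).dep.not_indep (hJ.subset hCJ)
  have hforest := G.encard_add_one_le_of_forall_not_cycleSet (hJH.trans hHG.2.1)
    (fun f hf x hx => H.ends_mem (hJH hf) (hHG.2.2 ▸ hx)) H.finV hne hacyc
  rw [rank_eq_toNat_eRk, ← hI.encard_eq_eRk, ncard_def]
  exact ENat.toNat_le_toNat (hIJ.trans hforest) H.finV.encard_lt_top.ne

lemma closure_delete_subset_union_loopsAt (hG : IsCycleMatroidOf G (M ／ {e})) (v : γ) :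
    (M ＼ {e}).closure (G.deleteVertex v).E ⊆ (G.deleteVertex v).E ∪ G.loopsAt v := by
  intro f hf
  by_contra hfX
  rw [mem_union, not_or] at hfX
  have hfG : f ∈ G.E := hG.1 ▸ (M ＼ {e}).closure_subset_ground _ hf
  have hvf : v ∈ G.ends f := by
    by_contra hvf
    exact hfX.1 ⟨hfG, fun x hx hxv => hvf (hxv ▸ hx)⟩
  obtain ⟨C, hCX, hC, hfC⟩ :=
    exists_isCircuit_of_mem_closure (delete_closure_subset_contract_closure _ _ _ hf) hfX.1
  obtain ⟨g, hgC, hgf, hvg⟩ :=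
    (hG.isCircuit_iff.1 hC).exists_ne_mem_ends hfC hvf (fun h => hfX.2 ⟨hfG, h⟩)
  exact ((hCX hgC).resolve_left hgf).2 v hvg rfl

lemma exists_isCircuit_contract_reflTransGen (hG : IsCycleMatroidOf G (M ／ {e})) {C : Set α}
    (hC : (M ＼ {e}).IsCircuit C) {x : γ} (hx : x ∈ (G.restrictEdges C).V) :
    ∃ D ⊆ C, (M ／ {e}).IsCircuit D ∧
      ∀ d ∈ D, ∀ y ∈ G.ends d, Relation.ReflTransGen (G.restrictEdges C).Adj x y := by
  obtain ⟨f, ⟨hfC, -⟩, hxf⟩ := hx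
  obtain ⟨D, hDC, hD, hfD⟩ := exists_isCircuit_of_mem_closure
    (delete_closure_subset_contract_closure _ _ _ (hC.mem_closure_sdiff_singleton_of_mem hfC))
    (fun h => h.2 rfl)
  have hDC' : D ⊆ C := hDC.trans (insert_subset hfC sdiff_subset)
  exact ⟨D, hDC', hD, fun d hd y hy => Relation.ReflTransGen.mono
    (fun _ _ => Graph.restrictEdges_adj_mono hDC') _ _
    ((hG.isCircuit_iff.1 hD).reflTransGen hfD hd hxf hy)⟩

lemma atMostTwoComponents_restrictEdges_of_isCircuit (hG : IsCycleMatroidOf G (M ／ {e}))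
    {C : Set α} (hC : (M ＼ {e}).IsCircuit C) : (G.restrictEdges C).AtMostTwoComponents := by
  set R := Relation.ReflTransGen (G.restrictEdges C).Adj
  choose! D hDC hD hreach using fun x => exists_isCircuit_contract_reflTransGen hG hC (x := x)
  have hdisj : ∀ x ∈ (G.restrictEdges C).V, ∀ y ∈ (G.restrictEdges C).V, ¬ R x y →
      Disjoint (D x) (D y) := fun x hx y hy hxy => disjoint_left.2 fun d hdx hdy =>
    hxy ((hreach x hx d hdx _ (Sym2.out_fst_mem _)).trans
      (Graph.reflTransGen_adj_symm (hreach y hy d hdy _ (Sym2.out_fst_mem _))))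
  intro u hu v hv w hw
  by_contra! huvw
  obtain ⟨huv, huw, hvw⟩ := huvw
  have hne : ∀ {x y}, ¬ R x y → x ≠ y := fun h hxy => h (hxy ▸ .refl)
  have hsymm : ∀ {x y}, ¬ R x y → ¬ R y x := fun h h' => h (Graph.reflTransGen_adj_symm h')
  have hV : ∀ x ∈ ({u, v, w} : Set γ), x ∈ (G.restrictEdges C).V := by
    rintro x (rfl | rfl | rfl) <;> assumption
  have hs : ({u, v, w} : Set γ).PairwiseDisjoint D := by
    rintro x hx y hy hxy
    refine hdisj x (hV x hx) y (hV y hy) ?_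
    rcases hx with rfl | rfl | rfl <;> rcases hy with rfl | rfl | rfl <;>
      first
        | exact absurd rfl hxy
        | assumption
        | exact hsymm ‹_›
  obtain ⟨t, htC⟩ := hC.nonempty
  obtain ⟨J, hJC, hJ, hCJ⟩ := (hC.ssubset_indep (sdiff_singleton_ssubset.2 htC)).of_delete
    |>.exists_subset_contract_singleton_indep (e := e)
  have h3 := hJ.encard_add_encard_le_of_pairwiseDisjoint_dep (hJC.trans sdiff_subset)
    (fun x hx => ⟨(hD x (hV x hx)).dep, hDC x (hV x hx)⟩) hs
  rw [encard_eq_three.2 ⟨u, v, w, hne huv, hne huw, hne hvw, rfl⟩] at h3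
  have hCfin : C.Finite := G.finE.subset (hC.subset_ground.trans hG.1.subset)
  have hlt : J.encard + 3 ≤ J.encard + 2 := calc
    J.encard + 3 ≤ C.encard := h3
    _ = (C \ {t}).encard + 1 := (encard_sdiff_singleton_add_one htC).symm
    _ ≤ J.encard + 1 + 1 := by gcongr
    _ = J.encard + 2 := by rw [add_assoc, one_add_one_eq_two]
  have hJfin : J.encard ≠ ⊤ := (hCfin.subset (hJC.trans sdiff_subset)).encard_lt_top.ne
  exact absurd ((ENat.add_le_add_iff_left hJfin).1 hlt) (by norm_num)

theorem framework_delete_of_isCycleMatroidOf_contract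
    (hG : IsCycleMatroidOf G (contractM M {e})) : Framework G (deleteM M {e}) :=
  ⟨⟨hG.1.symm, fun _ ⟨v, hv, hH⟩ => hH ▸ rank_delete_le_ncard hG (G.componentOf_isSubgraph v)
      ⟨v, hv, .refl⟩, fun v _ => closure_delete_subset_union_loopsAt hG v⟩,
    fun _ hC => atMostTwoComponents_restrictEdges_of_isCircuit hG (isCircuit_iff_isCircuit.1 hC)⟩

theorem Framework.comap {β : Type*} {M : Matroid β} {f : β → α} (hf : Function.Injective f)
    (hG : Framework G (M.map f hf.injOn)) : Framework (G.comap f hf) M := by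
  obtain ⟨⟨hE, hrank, hcl⟩, hcirc⟩ := hG
  have hrange : G.E ⊆ range f := hE ▸ image_subset_range f M.E
  refine ⟨⟨by simp [Graph.comap, hE, hf.preimage_image], ?_, fun v hv x hx => ?_⟩,
    fun C hC => ?_⟩
  · rintro _ ⟨v, hv, rfl⟩
    rw [Graph.componentOf_comap hrange]
    have hK : (G.componentOf v).E ⊆ f '' M.E := (sep_subset _ _).trans hE.subset
    have hKM : f ⁻¹' (G.componentOf v).E ⊆ M.E := by
      simpa [hf.preimage_image] using preimage_mono (f := f) hK
    have := hrank _ ⟨v, hv, rfl⟩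
    rwa [← image_preimage_eq_of_subset (hK.trans (image_subset_range _ _)),
      rank_map_image M hf.injOn hKM] at this
  · exact hcl v hv (by rw [map_closure_eq]; exact mem_image_of_mem f hx)
  · rw [Graph.restrictEdges_comap,
      Graph.atMostTwoComponents_comap (inter_subset_left.trans (image_subset_range _ _))]
    exact hcirc _ (isCircuit_iff_isCircuit.2 ((isCircuit_iff_isCircuit.1 hC).map hf.injOn))

end Framework

universe v

/-- Every lifted-graphic matroid is quasi-graphic, i.e. every
lifted-graphic matroid has a framework. -/
theorem statement1 {β : Type v} (M : Matroid β) (h : LiftedGraphic M) :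
    QuasiGraphic M := by
  obtain ⟨M', -, hdel, γ, G, hG⟩ := h
  have hF := framework_delete_of_isCycleMatroidOf_contract hG
  rw [hdel] at hF
  exact ⟨γ, G.comap some (Option.some_injective β), hF.comap (Option.some_injective β)⟩

end QuasiGraphicPaper
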